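/- For every integer m ≥ 1, every real c > 0 and every real h > 0, the maximizer in the previous statement is unique: for every real q with q ≠ -h, F_m((q + 2h)/c) - F_m(q/c) < F_m(h/c) - F_m(-h/c). -/

import Mathlib

/-!
With `a = q / c` and `L = h / c` the claim compares the mass of the windows `[a, a + 2L]` and
`[-L, L]`. Cancelling their overlap, the difference of the two masses is
`∫ x in a..-L, (f x - f (x + 2L))`. Between `a` and `-L` the sign of
`(x + 2L)² - x² = 4L(x + L)` is that of `a + L`, so, the density being strictly decreasing in `x²`,
the integrand has a strict sign there and the difference is negative on either side of `-L`.
-/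

open MeasureTheory

/-- Student t pdf with `m` degrees of freedom. -/
noncomputable def tPdf (m : ℕ) (x : ℝ) : ℝ :=
  (Real.Gamma (((m : ℝ) + 1) / 2) / (Real.sqrt ((m : ℝ) * Real.pi) * Real.Gamma ((m : ℝ) / 2))) *
    (1 + x ^ 2 / (m : ℝ)) ^ (-(((m : ℝ) + 1) / 2))

/-- Student t cdf with `m` degrees of freedom. -/
noncomputable def tCdf (m : ℕ) (x : ℝ) : ℝ :=
  ∫ u in Set.Iic x, tPdf m u

section WindowMass

variable {f g : ℝ → ℝ}

lemma intervalIntegral_lt_intervalIntegral_of_lt_on_Ioo {a b : ℝ} (hab : a < b)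
    (hf : IntervalIntegrable f volume a b) (hg : IntervalIntegrable g volume a b)
    (hlt : ∀ x ∈ Set.Ioo a b, f x < g x) :
    ∫ x in a..b, f x < ∫ x in a..b, g x := by
  rw [← sub_pos, ← intervalIntegral.integral_sub hg hf]
  exact intervalIntegral.intervalIntegral_pos_of_pos_on (hg.sub hf)
    (fun x hx => sub_pos.2 (hlt x hx)) hab

lemma intervalIntegral_lt_intervalIntegral_centered (hf : Continuous f)
    (hdec : ∀ x y : ℝ, x ^ 2 < y ^ 2 → f y < f x) {L a : ℝ} (hL : 0 < L) (ha : a ≠ -L) :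
    ∫ x in a..a + 2 * L, f x < ∫ x in -L..L, f x := by
  have hshift : ∫ x in (a + 2 * L)..L, f x = ∫ x in a..-L, f (x + 2 * L) := by
    rw [intervalIntegral.integral_comp_add_right f (2 * L)]
    ring_nf
  have hfi : ∀ u v, IntervalIntegrable f volume u v := hf.intervalIntegrable
  have hgi : ∀ u v, IntervalIntegrable (fun x => f (x + 2 * L)) volume u v :=
    (hf.comp (continuous_add_const (2 * L))).intervalIntegrable
  rw [← sub_neg, intervalIntegral.integral_interval_sub_interval_comm (hfi _ _) (hfi _ _)
    (hfi _ _), hshift, sub_neg]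
  rcases ha.lt_or_gt with ha | ha
  · exact intervalIntegral_lt_intervalIntegral_of_lt_on_Ioo ha (hfi _ _) (hgi _ _)
      fun x hx => hdec _ _ (by nlinarith [hx.2])
  · simp only [intervalIntegral.integral_symm (-L) a, neg_lt_neg_iff]
    exact intervalIntegral_lt_intervalIntegral_of_lt_on_Ioo ha (hgi _ _) (hfi _ _)
      fun x hx => hdec _ _ (by nlinarith [hx.1])

end WindowMass

section StudentT

variable {m : ℕ}

lemma tPdf_const_pos (hm : 1 ≤ m) :
    0 < Real.Gamma (((m : ℝ) + 1) / 2) /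
      (Real.sqrt ((m : ℝ) * Real.pi) * Real.Gamma ((m : ℝ) / 2)) := by
  have hm' : (0 : ℝ) < m := by exact_mod_cast hm
  exact div_pos (Real.Gamma_pos_of_pos (by positivity))
    (mul_pos (Real.sqrt_pos.2 (by positivity)) (Real.Gamma_pos_of_pos (by positivity)))

lemma tPdf_lt_tPdf_of_sq_lt (hm : 1 ≤ m) {x y : ℝ} (hxy : x ^ 2 < y ^ 2) :
    tPdf m y < tPdf m x := by
  have hm' : (0 : ℝ) < m := by exact_mod_cast hm
  refine mul_lt_mul_of_pos_left (Real.rpow_lt_rpow_of_neg (by positivity) ?_ ?_)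
    (tPdf_const_pos hm)
  · gcongr
  · linarith

lemma continuous_tPdf : Continuous (tPdf m) :=
  continuous_const.mul <| (by fun_prop : Continuous fun x : ℝ => 1 + x ^ 2 / (m : ℝ)).rpow_const
    fun x => Or.inl (by positivity)

lemma integrable_tPdf (hm : 1 ≤ m) : Integrable (tPdf m) := by
  have hm' : (0 : ℝ) < m := by exact_mod_cast hm
  have hdim : (Module.finrank ℝ ℝ : ℝ) < m + 1 := by simpa using hm'
  convert ((integrable_rpow_neg_one_add_norm_sq (μ := volume) hdim).comp_div
    (Real.sqrt_pos.2 hm').ne').const_mul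
      (Real.Gamma (((m : ℝ) + 1) / 2) /
        (Real.sqrt ((m : ℝ) * Real.pi) * Real.Gamma ((m : ℝ) / 2))) using 1
  ext x
  rw [tPdf, Real.norm_eq_abs, sq_abs, div_pow, Real.sq_sqrt hm'.le, neg_div]

lemma tCdf_sub_tCdf (hm : 1 ≤ m) (a b : ℝ) :
    tCdf m b - tCdf m a = ∫ x in a..b, tPdf m x :=
  intervalIntegral.integral_Iic_sub_Iic (integrable_tPdf hm).integrableOn
    (integrable_tPdf hm).integrableOn

end StudentT

/-- For every integer `m ≥ 1`, real `c > 0` and real `h > 0`, the maximizer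
`q = -h` of `q ↦ F_m((q + 2h)/c) - F_m(q/c)` is unique. -/
theorem stmt7 (m : ℕ) (hm : 1 ≤ m) (c : ℝ) (hc : 0 < c) (h : ℝ) (hh : 0 < h)
    (q : ℝ) (hq : q ≠ -h) :
    tCdf m ((q + 2 * h) / c) - tCdf m (q / c) < tCdf m (h / c) - tCdf m (-h / c) := by
  have ha : q / c ≠ -(h / c) := by rwa [ne_eq, ← neg_div, div_left_inj' hc.ne']
  rw [show (q + 2 * h) / c = q / c + 2 * (h / c) by ring, neg_div, tCdf_sub_tCdf hm,
    tCdf_sub_tCdf hm]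
  exact intervalIntegral_lt_intervalIntegral_centered continuous_tPdf
    (fun _ _ => tPdf_lt_tPdf_of_sq_lt hm) (div_pos hh hc) ha
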